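/- Let A ⊆ 2^ω, η ∈ 2^ω, and ⟨r,w⟩ a condition of Q^A. Then η ∈ w if and only if there exists M ∈ ω such that for every m ≥ M and every condition ⟨r′,w′⟩ of Q^A with ⟨r,w⟩ ≤ ⟨r′,w′⟩ and η↾m ∈ dom(r′), one has r′(η↾m) = 1. -/

import Mathlib

/-- Restriction `η↾m` of `η ∈ 2^ω` to its first `m` entries, as a finite binary sequence. -/
def restrict (η : ℕ → Bool) (m : ℕ) : List Bool := List.ofFn (fun i : Fin m => η i)

/-- Conditions of the forcing notion `Q^A`: pairs `⟨r, w⟩` where `r` is a finite partial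
function from `2^{<ω}` to `{0,1}` (coded with values in `Option Bool`) and `w` is a finite
subset of `A`. -/
def QACond (A : Set (ℕ → Bool)) : Type :=
  {c : (List Bool → Option Bool) × Set (ℕ → Bool) //
    {ν : List Bool | c.1 ν ≠ none}.Finite ∧ c.2 ⊆ A ∧ c.2.Finite}

/-- The order of `Q^A`: `⟨r₁,w₁⟩ ≤ ⟨r₂,w₂⟩` iff `r₁ ⊆ r₂`, `w₁ ⊆ w₂`, and every
`ν ∈ dom r₂ \ dom r₁` which is an initial segment of some `η ∈ w₁` gets value `1`. -/
def QACond.le {A : Set (ℕ → Bool)} (c₁ c₂ : QACond A) : Prop :=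
  (∀ (ν : List Bool) (b : Bool), c₁.1.1 ν = some b → c₂.1.1 ν = some b) ∧
  c₁.1.2 ⊆ c₂.1.2 ∧
  ∀ ν : List Bool, c₂.1.1 ν ≠ none → c₁.1.1 ν = none →
    (∃ η ∈ c₁.1.2, restrict η ν.length = ν) → c₂.1.1 ν = some true

/-! If `η ∈ w`, then any `η↾m` longer than every node of `dom r` is new in an
extension and is an initial segment of `η ∈ w`, so it must get value `1`. Conversely, if
`η ∉ w`, then for large `m` the node `η↾m` is outside `dom r` and is not an initial segment of
any of the finitely many members of `w`, so `r` may be extended by `r(η↾m) = 0`. -/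

@[simp]
lemma restrict_length (η : ℕ → Bool) (m : ℕ) : (restrict η m).length = m := by
  simp [restrict]

lemma restrict_eq_restrict_iff {η η' : ℕ → Bool} {m : ℕ} :
    restrict η' m = restrict η m ↔ ∀ i < m, η' i = η i := by
  simp [restrict, List.ofFn_inj, funext_iff, Fin.forall_iff]

lemma eventually_restrict_ne_of_notMem {w : Set (ℕ → Bool)} (hw : w.Finite)
    {η : ℕ → Bool} (hη : η ∉ w) :
    ∃ K, ∀ m ≥ K, ∀ η' ∈ w, restrict η' m ≠ restrict η m := by
  have hsplit : ∀ η' ∈ w, ∃ i, η' i ≠ η i := fun η' hη' =>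
    Function.ne_iff.mp fun h => hη (h ▸ hη')
  choose! split hsplit using hsplit
  obtain ⟨B, hB⟩ := (hw.image split).bddAbove
  refine ⟨B + 1, fun m hm η' hη' heq => hsplit η' hη' ?_⟩
  exact restrict_eq_restrict_iff.mp heq _ (by have := hB ⟨η', hη', rfl⟩; omega)

namespace QACond

variable {A : Set (ℕ → Bool)}

lemma eventually_restrict_notMem_dom (c : QACond A) (η : ℕ → Bool) :
    ∃ N, ∀ m ≥ N, c.1.1 (restrict η m) = none := by
  obtain ⟨N, hN⟩ := (c.2.1.image List.length).bddAbove
  refine ⟨N + 1, fun m hm => ?_⟩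
  by_contra h
  have := hN ⟨_, h, rfl⟩
  simp only [restrict_length] at this
  omega

def extend (c : QACond A) (ν : List Bool) (b : Bool) : QACond A :=
  ⟨⟨Function.update c.1.1 ν (some b), c.1.2⟩,
    (c.2.1.insert ν).subset fun μ hμ => by
      by_cases h : μ = ν
      · exact h ▸ Set.mem_insert _ _
      · exact Set.mem_insert_of_mem _ (by simpa [Function.update_of_ne h] using hμ),
    c.2.2⟩

lemma le_extend (c : QACond A) {ν : List Bool} (b : Bool) (hν : c.1.1 ν = none)
    (hfree : ∀ η ∈ c.1.2, restrict η ν.length ≠ ν) : c.le (c.extend ν b) := by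
  refine ⟨fun μ b' hμ => ?_, subset_rfl, fun μ hμ hμc ⟨η, hη, hres⟩ => ?_⟩
  · have hne : μ ≠ ν := by rintro rfl; simp [hν] at hμ
    simpa [extend, Function.update_of_ne hne] using hμ
  · have hne : μ ≠ ν := by rintro rfl; exact hfree η hη hres
    simp [extend, Function.update_of_ne hne, hμc] at hμ

end QACond

/-- For a condition `⟨r,w⟩` of `Q^A` and `η ∈ 2^ω`: `η ∈ w` iff there is `M` such that
every extension `⟨r′,w′⟩ ≥ ⟨r,w⟩` with `η↾m ∈ dom r′` for some `m ≥ M` has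
`r′(η↾m) = 1`. (That is, `⟨r,w⟩` forces `ṙ(η↾m) = 1` for all but finitely many `m`
iff `η ∈ w`.) -/
theorem qa_membership_characterization (A : Set (ℕ → Bool)) (η : ℕ → Bool) (c : QACond A) :
    η ∈ c.1.2 ↔
      ∃ M : ℕ, ∀ m ≥ M, ∀ c' : QACond A, QACond.le c c' →
        c'.1.1 (restrict η m) ≠ none → c'.1.1 (restrict η m) = some true := by
  obtain ⟨N, hN⟩ := c.eventually_restrict_notMem_dom η
  constructor
  · intro hη
    exact ⟨N, fun m hm c' hle hdom =>
      hle.2.2 _ hdom (hN m hm) ⟨η, hη, by rw [restrict_length]⟩⟩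
  · rintro ⟨M, hM⟩
    by_contra hη
    obtain ⟨K, hK⟩ := eventually_restrict_ne_of_notMem c.2.2.2 hη
    set m := max M (max N K)
    have hle : c.le (c.extend (restrict η m) false) :=
      c.le_extend false (hN m (by omega)) (by simpa using hK m (by omega))
    have := hM m (le_max_left _ _) _ hle (by simp [QACond.extend])
    simp [QACond.extend] at this
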